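/- For integers m ≥ 1, n ≥ 0, sequences of nonnegative integers a_i and c_i, and rationals x_i and y_i, the sum over all tuples (k_1,...,k_m) with ∑ k_i = n of [∏ C(a_i,k_i)C(k_i,c_i)] * (∑ x_i k_i)(∑ y_i k_i), multiplied by (A_0-C_0)(A_0-C_0-1), equals C(A_0-C_0, n-C_0) * [∏ C(a_i,c_i)] * { (n-C_0)[(n-C_0-1) A_1 A_1* + (A_0-n)(A_{1,1}* - C_{1,1}* + A_1 C_1* + A_1* C_1)] + (A_0-n)(A_0-n-1) C_1 C_1* }. -/

import Mathlib

open Finset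

/-- Binomial coefficient with integer arguments, zero when `k < 0` or `k > n`. -/
def ch (n k : ℤ) : ℚ := if 0 ≤ k ∧ k ≤ n then (n.toNat.choose k.toNat : ℚ) else 0

lemma ch_nat (n k : ℕ) : ch n k = n.choose k := by
  unfold ch
  split
  · simp
  · rename_i h
    push_neg at h
    have : n < k := by exact_mod_cast h (by positivity)
    simp [Nat.choose_eq_zero_of_lt this]

lemma ch_neg {n k : ℤ} (h : k < 0) : ch n k = 0 := by
  unfold ch; rw [if_neg]; rintro ⟨h1, -⟩; omega

lemma ch_of_gt {n k : ℤ} (h : n < k) : ch n k = 0 := by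
  unfold ch; rw [if_neg]; rintro ⟨-, h2⟩; omega

-- sum recursion over antidiagonalTuple
lemma sum_adt_succ {M : Type*} [AddCommMonoid M] (m n : ℕ) (f : (Fin (m+1) → ℕ) → M) :
    ∑ k ∈ Finset.Nat.antidiagonalTuple (m+1) n, f k
      = ∑ p ∈ Finset.HasAntidiagonal.antidiagonal n, ∑ x ∈ Finset.Nat.antidiagonalTuple m p.2,
          f (Fin.cons p.1 x) := by
  rw [show (∑ p ∈ Finset.HasAntidiagonal.antidiagonal n, ∑ x ∈ Finset.Nat.antidiagonalTuple m p.2,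
      f (Fin.cons p.1 x))
      = ∑ q ∈ (Finset.HasAntidiagonal.antidiagonal n).sigma (fun p => Finset.Nat.antidiagonalTuple m p.2),
        f (Fin.cons q.1.1 q.2) from (Finset.sum_sigma (Finset.HasAntidiagonal.antidiagonal n)
          (fun p => Finset.Nat.antidiagonalTuple m p.2)
          (fun q => f (Fin.cons q.1.1 q.2))).symm]
  refine Finset.sum_nbij' (fun (k : Fin (m+1) → ℕ) =>
      (⟨(k 0, ∑ i : Fin m, k i.succ), Fin.tail k⟩ : Σ _p : ℕ × ℕ, Fin m → ℕ))
    (fun q => Fin.cons q.1.1 q.2) ?_ ?_ ?_ ?_ ?_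
  · intro k hk
    rw [Finset.Nat.mem_antidiagonalTuple] at hk
    simp only [Finset.mem_sigma, Finset.HasAntidiagonal.mem_antidiagonal, Finset.Nat.mem_antidiagonalTuple]
    exact ⟨by rw [← hk, Fin.sum_univ_succ], rfl⟩
  · intro q hq
    simp only [Finset.mem_sigma, Finset.HasAntidiagonal.mem_antidiagonal,
      Finset.Nat.mem_antidiagonalTuple] at hq
    rw [Finset.Nat.mem_antidiagonalTuple, Fin.sum_univ_succ]
    simp [Fin.cons_zero, Fin.cons_succ, hq.2, hq.1]
  · intro k _
    simp [Fin.cons_self_tail]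
  · intro q hq
    simp only [Finset.mem_sigma, Finset.HasAntidiagonal.mem_antidiagonal,
      Finset.Nat.mem_antidiagonalTuple] at hq
    obtain ⟨⟨p1, p2⟩, g⟩ := q
    simp only [Fin.tail_cons, Fin.cons_zero, Fin.cons_succ] at hq ⊢
    congr 2
    simpa using hq.2
  · intro k _
    simp [Fin.cons_self_tail]

lemma J0 (p q N : ℕ) (M : ℤ) (hMN : M ≤ N) :
    ∑ t ∈ Finset.range (N+1), (p.choose t : ℚ) * ch q (M - t) = ch (p + q) M := by
  rcases lt_or_ge M 0 with hM | hM
  · rw [ch_neg hM, Finset.sum_eq_zero]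
    intro t _
    rw [ch_neg (by omega), mul_zero]
  · obtain ⟨Mn, rfl⟩ := Int.eq_ofNat_of_zero_le hM
    have hMn : Mn ≤ N := by exact_mod_cast hMN
    rw [← Finset.sum_subset (Finset.range_subset_range.2 (by omega : Mn + 1 ≤ N + 1))
      (fun t _ ht => by
        rw [Finset.mem_range, not_lt] at ht
        rw [ch_neg (by simp only [Finset.mem_range] at *; omega), mul_zero])]
    have : ∀ t ∈ Finset.range (Mn + 1), (p.choose t : ℚ) * ch q ((Mn : ℤ) - t)
        = (p.choose t * q.choose (Mn - t) : ℕ) := by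
      intro t ht
      rw [Finset.mem_range] at ht
      have : ((Mn : ℤ) - t) = ((Mn - t : ℕ) : ℤ) := by omega
      rw [this, ch_nat]
      push_cast
      ring
    rw [Finset.sum_congr rfl this, ← Nat.cast_sum]
    have := Nat.add_choose_eq p q Mn
    rw [Finset.Nat.sum_antidiagonal_eq_sum_range_succ_mk] at this
    rw [← this]
    have : ((p : ℤ) + q) = ((p + q : ℕ) : ℤ) := by push_cast; ring
    rw [this, ch_nat]

lemma J1 (p q N : ℕ) (M : ℤ) (hMN : M ≤ N) :
    ∑ t ∈ Finset.range (N+1), (t : ℚ) * p.choose t * ch q (M - t)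
      = p * ch ((p : ℤ) + q - 1) (M - 1) := by
  cases p with
  | zero =>
    rw [Finset.sum_eq_zero, Nat.cast_zero, zero_mul]
    intro t _
    cases t with
    | zero => simp
    | succ t => simp [Nat.choose_zero_succ]
  | succ p =>
    rw [Finset.sum_range_succ']
    simp only [Nat.cast_zero, zero_mul, add_zero]
    have key : ∀ t : ℕ, ((t : ℚ) + 1) * ((p+1).choose (t+1) : ℚ) = (p + 1) * p.choose t := by
      intro t
      have h2 : ((p+1) * p.choose t : ℕ) = ((p+1).choose (t+1) * (t+1) : ℕ) :=
        Nat.add_one_mul_choose_eq p t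
      have h3 := congrArg (Nat.cast : ℕ → ℚ) h2
      push_cast at h3
      linear_combination -h3
    have step : ∀ t ∈ Finset.range N, ((t + 1 : ℕ) : ℚ) * ((p+1).choose (t+1) : ℚ)
        * ch q (M - ((t + 1 : ℕ) : ℤ))
        = (p + 1) * ((p.choose t : ℚ) * ch q ((M - 1) - t)) := by
      intro t _
      have harg : M - ((t + 1 : ℕ) : ℤ) = (M - 1) - t := by push_cast; ring
      rw [harg]
      push_cast
      linear_combination ch q ((M-1) - (t:ℤ)) * key t
    rw [Finset.sum_congr rfl step, ← Finset.mul_sum]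
    cases N with
    | zero =>
      have hneg : M - 1 < 0 := by omega
      rw [ch_neg hneg]
      simp
    | succ N =>
      rw [J0 p q N (M-1) (by push_cast at hMN ⊢; omega)]
      have harg2 : ((p+1 : ℕ) : ℤ) + q - 1 = ((p : ℤ) + q) := by push_cast; ring
      rw [harg2]
      push_cast
      ring

lemma J2 (p q N : ℕ) (M : ℤ) (hMN : M ≤ N) :
    ∑ t ∈ Finset.range (N+1), (t : ℚ) * ((t : ℚ) - 1) * p.choose t * ch q (M - t)
      = p * ((p : ℚ) - 1) * ch ((p : ℤ) + q - 2) (M - 2) := by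
  cases p with
  | zero =>
    rw [Finset.sum_eq_zero]
    · simp
    intro t _
    match t with
    | 0 => simp
    | 1 => simp
    | (t+2) => simp [Nat.choose_zero_succ]
  | succ p =>
    rw [Finset.sum_range_succ']
    simp only [Nat.cast_zero, zero_mul, add_zero]
    have key : ∀ t : ℕ, ((t : ℚ) + 1) * ((p+1).choose (t+1) : ℚ) = (p + 1) * p.choose t := by
      intro t
      have h2 : ((p+1) * p.choose t : ℕ) = ((p+1).choose (t+1) * (t+1) : ℕ) :=
        Nat.add_one_mul_choose_eq p t
      have h3 := congrArg (Nat.cast : ℕ → ℚ) h2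
      push_cast at h3
      linear_combination -h3
    have step : ∀ t ∈ Finset.range N, ((t + 1 : ℕ) : ℚ) * (((t + 1 : ℕ) : ℚ) - 1)
        * ((p+1).choose (t+1) : ℚ) * ch q (M - ((t + 1 : ℕ) : ℤ))
        = (p + 1) * ((t : ℚ) * (p.choose t : ℚ) * ch q ((M - 1) - t)) := by
      intro t _
      have harg : M - ((t + 1 : ℕ) : ℤ) = (M - 1) - t := by push_cast; ring
      rw [harg]
      push_cast
      linear_combination (t : ℚ) * ch q ((M-1) - (t:ℤ)) * key t
    rw [Finset.sum_congr rfl step, ← Finset.mul_sum]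
    cases N with
    | zero =>
      have hneg : M - 2 < 0 := by omega
      rw [ch_neg hneg]
      simp
    | succ N =>
      rw [J1 p q N (M-1) (by push_cast at hMN ⊢; omega)]
      have harg2 : ((p+1 : ℕ) : ℤ) + q - 2 = ((p : ℤ) + q - 1) := by push_cast; ring
      rw [harg2]
      have harg3 : M - 1 - 1 = M - 2 := by ring
      rw [harg3]
      push_cast
      ring

lemma T1 (m N : ℕ) (b : Fin m → ℕ) :
    ∑ k ∈ Finset.Nat.antidiagonalTuple m N, ∏ i, (b i).choose (k i)
      = (∑ i, b i).choose N := by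
  induction m generalizing N with
  | zero =>
    cases N with
    | zero => simp
    | succ N => simp [Finset.Nat.antidiagonalTuple_zero_succ]
  | succ m ih =>
    rw [sum_adt_succ]
    have : ∀ p : ℕ × ℕ, p ∈ Finset.HasAntidiagonal.antidiagonal N →
        ∑ x ∈ Finset.Nat.antidiagonalTuple m p.2,
          ∏ i : Fin (m+1), (b i).choose ((Fin.cons p.1 x : Fin (m+1) → ℕ) i)
        = (b 0).choose p.1 * (∑ i : Fin m, b i.succ).choose p.2 := by
      intro p _
      rw [← ih]
      rw [Finset.mul_sum]
      refine Finset.sum_congr rfl fun x _ => ?_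
      rw [Fin.prod_univ_succ]
      simp [Fin.cons_zero, Fin.cons_succ]
    rw [Finset.sum_congr rfl this, Fin.sum_univ_succ, Nat.add_choose_eq]

lemma T1Q (m N : ℕ) (b : Fin m → ℕ) :
    ∑ k ∈ Finset.Nat.antidiagonalTuple m N, ∏ i, ((b i).choose (k i) : ℚ)
      = ((∑ i, b i).choose N : ℚ) := by
  rw [← T1]
  push_cast
  rfl

lemma T2 (m N : ℕ) (b : Fin m → ℕ) (i : Fin m) :
    ∑ k ∈ Finset.Nat.antidiagonalTuple m N, (∏ j, ((b j).choose (k j) : ℚ)) * (k i : ℚ)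
      = (b i : ℚ) * ch ((∑ j, (b j : ℤ)) - 1) ((N : ℤ) - 1) := by
  induction m generalizing N with
  | zero => exact i.elim0
  | succ m ih =>
    rw [sum_adt_succ]
    have prodsplit : ∀ (t : ℕ) (x : Fin m → ℕ),
        (∏ j : Fin (m+1), ((b j).choose ((Fin.cons t x : Fin (m+1) → ℕ) j) : ℚ))
        = ((b 0).choose t : ℚ) * ∏ j : Fin m, ((b j.succ).choose (x j) : ℚ) := by
      intro t x
      rw [Fin.prod_univ_succ]
      simp [Fin.cons_zero, Fin.cons_succ]
    induction i using Fin.cases with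
    | zero =>
      have inner : ∀ p : ℕ × ℕ, p ∈ Finset.HasAntidiagonal.antidiagonal N →
          (∑ x ∈ Finset.Nat.antidiagonalTuple m p.2,
            (∏ j : Fin (m+1), ((b j).choose ((Fin.cons p.1 x : Fin (m+1) → ℕ) j) : ℚ))
              * (((Fin.cons p.1 x : Fin (m+1) → ℕ) 0 : ℕ) : ℚ))
          = (p.1 : ℚ) * ((b 0).choose p.1 : ℚ) * ((∑ j : Fin m, b j.succ).choose p.2 : ℚ) := by
        intro p _
        rw [← T1Q m p.2 (fun j => b j.succ), Finset.mul_sum]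
        refine Finset.sum_congr rfl fun x _ => ?_
        rw [prodsplit]
        simp only [Fin.cons_zero]
        ring
      rw [Finset.sum_congr rfl inner, Finset.Nat.sum_antidiagonal_eq_sum_range_succ_mk]
      have conv1 : ∀ t ∈ Finset.range (N+1),
          (t : ℚ) * ((b 0).choose t : ℚ) * ((∑ j : Fin m, b j.succ).choose (N - t) : ℚ)
          = (t : ℚ) * ((b 0).choose t : ℚ) * ch (((∑ j : Fin m, b j.succ : ℕ)) : ℤ) ((N : ℤ) - t) := by
        intro t ht
        rw [Finset.mem_range] at ht
        have : ((N : ℤ) - t) = ((N - t : ℕ) : ℤ) := by omega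
        rw [this, ch_nat]
      rw [Finset.sum_congr rfl conv1, J1 (b 0) (∑ j : Fin m, b j.succ) N N le_rfl]
      have hE : ((b 0 : ℕ) : ℤ) + ((∑ j : Fin m, b j.succ : ℕ) : ℤ) - 1
          = (∑ j : Fin (m+1), (b j : ℤ)) - 1 := by
        rw [Fin.sum_univ_succ (f := fun j => ((b j) : ℤ))]
        push_cast
        ring
      rw [hE]
    | succ i =>
      have inner : ∀ p : ℕ × ℕ, p ∈ Finset.HasAntidiagonal.antidiagonal N →
          (∑ x ∈ Finset.Nat.antidiagonalTuple m p.2,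
            (∏ j : Fin (m+1), ((b j).choose ((Fin.cons p.1 x : Fin (m+1) → ℕ) j) : ℚ))
              * (((Fin.cons p.1 x : Fin (m+1) → ℕ) i.succ : ℕ) : ℚ))
          = ((b 0).choose p.1 : ℚ) * ((b i.succ : ℚ)
              * ch ((∑ j : Fin m, (b j.succ : ℤ)) - 1) ((p.2 : ℤ) - 1)) := by
        intro p _
        rw [← ih p.2 (fun j => b j.succ) i, Finset.mul_sum]
        refine Finset.sum_congr rfl fun x _ => ?_
        rw [prodsplit]
        simp only [Fin.cons_succ]
        ring
      rw [Finset.sum_congr rfl inner, Finset.Nat.sum_antidiagonal_eq_sum_range_succ_mk]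
      by_cases hB : (∑ j : Fin m, b j.succ) = 0
      · have hbz : b i.succ = 0 := Finset.sum_eq_zero_iff.mp hB i (Finset.mem_univ i)
        rw [hbz]
        simp
      · obtain ⟨q, hq⟩ := Nat.exists_eq_succ_of_ne_zero hB
        have hq2 : (∑ j : Fin m, (b j.succ : ℤ)) - 1 = (q : ℤ) := by
          have h5 : ((∑ j : Fin m, b j.succ : ℕ) : ℤ) = ((q+1 : ℕ) : ℤ) := by
            rw [hq]
          push_cast at h5
          omega
        have conv1 : ∀ t ∈ Finset.range (N+1),
            ((b 0).choose t : ℚ) * ((b i.succ : ℚ)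
              * ch ((∑ j : Fin m, (b j.succ : ℤ)) - 1) (((N - t : ℕ) : ℤ) - 1))
            = (b i.succ : ℚ) * (((b 0).choose t : ℚ) * ch q (((N : ℤ) - 1) - t)) := by
          intro t ht
          rw [Finset.mem_range] at ht
          rw [hq2]
          have harg : ((N - t : ℕ) : ℤ) - 1 = ((N : ℤ) - 1) - t := by omega
          rw [harg]
          ring
        rw [Finset.sum_congr rfl conv1, ← Finset.mul_sum,
          J0 (b 0) q N ((N : ℤ) - 1) (by omega)]
        have hE : ((b 0 : ℕ) : ℤ) + (q : ℤ) = (∑ j : Fin (m+1), (b j : ℤ)) - 1 := by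
          rw [Fin.sum_univ_succ (f := fun j => ((b j) : ℤ))]
          rw [← hq2]
          ring
        rw [hE]

lemma T3a (m N : ℕ) (b : Fin m → ℕ) (i : Fin m) :
    ∑ k ∈ Finset.Nat.antidiagonalTuple m N,
        (∏ j, ((b j).choose (k j) : ℚ)) * ((k i : ℚ) * ((k i : ℚ) - 1))
      = (b i : ℚ) * ((b i : ℚ) - 1) * ch ((∑ j, (b j : ℤ)) - 2) ((N : ℤ) - 2) := by
  induction m generalizing N with
  | zero => exact i.elim0
  | succ m ih =>
    rw [sum_adt_succ]
    have prodsplit : ∀ (t : ℕ) (x : Fin m → ℕ),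
        (∏ j : Fin (m+1), ((b j).choose ((Fin.cons t x : Fin (m+1) → ℕ) j) : ℚ))
        = ((b 0).choose t : ℚ) * ∏ j : Fin m, ((b j.succ).choose (x j) : ℚ) := by
      intro t x
      rw [Fin.prod_univ_succ]
      simp [Fin.cons_zero, Fin.cons_succ]
    induction i using Fin.cases with
    | zero =>
      have inner : ∀ p : ℕ × ℕ, p ∈ Finset.HasAntidiagonal.antidiagonal N →
          (∑ x ∈ Finset.Nat.antidiagonalTuple m p.2,
            (∏ j : Fin (m+1), ((b j).choose ((Fin.cons p.1 x : Fin (m+1) → ℕ) j) : ℚ))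
              * ((((Fin.cons p.1 x : Fin (m+1) → ℕ) 0 : ℕ) : ℚ)
                * ((((Fin.cons p.1 x : Fin (m+1) → ℕ) 0 : ℕ) : ℚ) - 1)))
          = (p.1 : ℚ) * ((p.1 : ℚ) - 1) * ((b 0).choose p.1 : ℚ)
              * ((∑ j : Fin m, b j.succ).choose p.2 : ℚ) := by
        intro p _
        rw [← T1Q m p.2 (fun j => b j.succ), Finset.mul_sum]
        refine Finset.sum_congr rfl fun x _ => ?_
        rw [prodsplit]
        simp only [Fin.cons_zero]
        ring
      rw [Finset.sum_congr rfl inner, Finset.Nat.sum_antidiagonal_eq_sum_range_succ_mk]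
      have conv1 : ∀ t ∈ Finset.range (N+1),
          (t : ℚ) * ((t : ℚ) - 1) * ((b 0).choose t : ℚ)
            * ((∑ j : Fin m, b j.succ).choose (N - t) : ℚ)
          = (t : ℚ) * ((t : ℚ) - 1) * ((b 0).choose t : ℚ)
            * ch (((∑ j : Fin m, b j.succ : ℕ)) : ℤ) ((N : ℤ) - t) := by
        intro t ht
        rw [Finset.mem_range] at ht
        have harg : ((N : ℤ) - t) = ((N - t : ℕ) : ℤ) := by omega
        rw [harg, ch_nat]
      rw [Finset.sum_congr rfl conv1, J2 (b 0) (∑ j : Fin m, b j.succ) N N le_rfl]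
      have hE : ((b 0 : ℕ) : ℤ) + ((∑ j : Fin m, b j.succ : ℕ) : ℤ) - 2
          = (∑ j : Fin (m+1), (b j : ℤ)) - 2 := by
        rw [Fin.sum_univ_succ (f := fun j => ((b j) : ℤ))]
        push_cast
        ring
      rw [hE]
    | succ i =>
      have inner : ∀ p : ℕ × ℕ, p ∈ Finset.HasAntidiagonal.antidiagonal N →
          (∑ x ∈ Finset.Nat.antidiagonalTuple m p.2,
            (∏ j : Fin (m+1), ((b j).choose ((Fin.cons p.1 x : Fin (m+1) → ℕ) j) : ℚ))
              * ((((Fin.cons p.1 x : Fin (m+1) → ℕ) i.succ : ℕ) : ℚ)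
                * ((((Fin.cons p.1 x : Fin (m+1) → ℕ) i.succ : ℕ) : ℚ) - 1)))
          = ((b 0).choose p.1 : ℚ) * ((b i.succ : ℚ) * ((b i.succ : ℚ) - 1)
              * ch ((∑ j : Fin m, (b j.succ : ℤ)) - 2) ((p.2 : ℤ) - 2)) := by
        intro p _
        rw [← ih p.2 (fun j => b j.succ) i, Finset.mul_sum]
        refine Finset.sum_congr rfl fun x _ => ?_
        rw [prodsplit]
        simp only [Fin.cons_succ]
        ring
      rw [Finset.sum_congr rfl inner, Finset.Nat.sum_antidiagonal_eq_sum_range_succ_mk]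
      by_cases hb1 : b i.succ ≤ 1
      · have hz : (b i.succ : ℚ) * ((b i.succ : ℚ) - 1) = 0 := by
          interval_cases h : (b i.succ) <;> simp
        rw [Finset.sum_eq_zero, hz]
        · ring
        intro t _
        rw [hz]
        ring
      · have hble : b i.succ ≤ ∑ j : Fin m, b j.succ :=
          Finset.single_le_sum (f := fun j : Fin m => b j.succ) (fun _ _ => Nat.zero_le _) (Finset.mem_univ i)
        obtain ⟨q, hq⟩ : ∃ q, ∑ j : Fin m, b j.succ = q + 2 := by
          refine ⟨(∑ j : Fin m, b j.succ) - 2, by omega⟩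
        have hq2 : (∑ j : Fin m, (b j.succ : ℤ)) - 2 = (q : ℤ) := by
          have h5 : ((∑ j : Fin m, b j.succ : ℕ) : ℤ) = ((q+2 : ℕ) : ℤ) := by rw [hq]
          push_cast at h5
          omega
        have conv1 : ∀ t ∈ Finset.range (N+1),
            ((b 0).choose t : ℚ) * ((b i.succ : ℚ) * ((b i.succ : ℚ) - 1)
              * ch ((∑ j : Fin m, (b j.succ : ℤ)) - 2) (((N - t : ℕ) : ℤ) - 2))
            = (b i.succ : ℚ) * ((b i.succ : ℚ) - 1)
              * (((b 0).choose t : ℚ) * ch q (((N : ℤ) - 2) - t)) := by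
          intro t ht
          rw [Finset.mem_range] at ht
          rw [hq2]
          have harg : ((N - t : ℕ) : ℤ) - 2 = ((N : ℤ) - 2) - t := by omega
          rw [harg]
          ring
        rw [Finset.sum_congr rfl conv1, ← Finset.mul_sum,
          J0 (b 0) q N ((N : ℤ) - 2) (by omega)]
        have hE : ((b 0 : ℕ) : ℤ) + (q : ℤ) = (∑ j : Fin (m+1), (b j : ℤ)) - 2 := by
          rw [Fin.sum_univ_succ (f := fun j => ((b j) : ℤ)), ← hq2]
          ring
        rw [hE]



lemma T3b (m N : ℕ) (b : Fin m → ℕ) (i j : Fin m) (hij : i ≠ j) :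
    ∑ k ∈ Finset.Nat.antidiagonalTuple m N,
        (∏ l, ((b l).choose (k l) : ℚ)) * ((k i : ℚ) * (k j : ℚ))
      = (b i : ℚ) * (b j : ℚ) * ch ((∑ l, (b l : ℤ)) - 2) ((N : ℤ) - 2) := by
  induction m generalizing N with
  | zero => exact i.elim0
  | succ m ih =>
    rw [sum_adt_succ]
    have prodsplit : ∀ (t : ℕ) (x : Fin m → ℕ),
        (∏ l : Fin (m+1), ((b l).choose ((Fin.cons t x : Fin (m+1) → ℕ) l) : ℚ))
        = ((b 0).choose t : ℚ) * ∏ l : Fin m, ((b l.succ).choose (x l) : ℚ) := by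
      intro t x
      rw [Fin.prod_univ_succ]
      simp [Fin.cons_zero, Fin.cons_succ]
    have hEsum : ∀ q : ℕ, (∑ l : Fin m, (b l.succ : ℤ)) - 1 = (q : ℤ) →
        ((b 0 : ℕ) : ℤ) + (q : ℤ) - 1 = (∑ l : Fin (m+1), (b l : ℤ)) - 2 := by
      intro q hq2
      rw [Fin.sum_univ_succ (f := fun l => ((b l) : ℤ)), ← hq2]
      ring
    -- the mixed (one index 0, one successor) case, as a general claim
    have mixed : ∀ r : Fin m,
        ∑ p ∈ Finset.HasAntidiagonal.antidiagonal N, ∑ x ∈ Finset.Nat.antidiagonalTuple m p.2,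
          (∏ l : Fin (m+1), ((b l).choose ((Fin.cons p.1 x : Fin (m+1) → ℕ) l) : ℚ))
            * ((p.1 : ℚ) * ((x r : ℕ) : ℚ))
        = (b 0 : ℚ) * (b r.succ : ℚ) * ch ((∑ l : Fin (m+1), (b l : ℤ)) - 2) ((N : ℤ) - 2) := by
      intro r
      have inner : ∀ p : ℕ × ℕ, p ∈ Finset.HasAntidiagonal.antidiagonal N →
          (∑ x ∈ Finset.Nat.antidiagonalTuple m p.2,
            (∏ l : Fin (m+1), ((b l).choose ((Fin.cons p.1 x : Fin (m+1) → ℕ) l) : ℚ))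
              * ((p.1 : ℚ) * ((x r : ℕ) : ℚ)))
          = (p.1 : ℚ) * ((b 0).choose p.1 : ℚ) * ((b r.succ : ℚ)
              * ch ((∑ l : Fin m, (b l.succ : ℤ)) - 1) ((p.2 : ℤ) - 1)) := by
        intro p _
        calc (∑ x ∈ Finset.Nat.antidiagonalTuple m p.2,
            (∏ l : Fin (m+1), ((b l).choose ((Fin.cons p.1 x : Fin (m+1) → ℕ) l) : ℚ))
              * ((p.1 : ℚ) * ((x r : ℕ) : ℚ)))
            = (p.1 : ℚ) * ((b 0).choose p.1 : ℚ)
              * ∑ x ∈ Finset.Nat.antidiagonalTuple m p.2,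
                (∏ l : Fin m, ((b l.succ).choose (x l) : ℚ)) * ((x r : ℕ) : ℚ) := by
              rw [Finset.mul_sum]
              refine Finset.sum_congr rfl fun x _ => ?_
              rw [prodsplit]
              ring
          _ = (p.1 : ℚ) * ((b 0).choose p.1 : ℚ) * ((b r.succ : ℚ)
              * ch ((∑ l : Fin m, (b l.succ : ℤ)) - 1) ((p.2 : ℤ) - 1)) := by
              rw [T2 m p.2 (fun l => b l.succ) r]
      rw [Finset.sum_congr rfl inner, Finset.Nat.sum_antidiagonal_eq_sum_range_succ_mk]
      by_cases hB : (∑ l : Fin m, b l.succ) = 0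
      · have hbz : b r.succ = 0 := Finset.sum_eq_zero_iff.mp hB r (Finset.mem_univ r)
        rw [Finset.sum_eq_zero fun t _ => by rw [hbz]; push_cast; ring, hbz]
        push_cast
        ring
      · obtain ⟨q, hq⟩ := Nat.exists_eq_succ_of_ne_zero hB
        have hq2 : (∑ l : Fin m, (b l.succ : ℤ)) - 1 = (q : ℤ) := by
          have h5 : ((∑ l : Fin m, b l.succ : ℕ) : ℤ) = ((q+1 : ℕ) : ℤ) := by rw [hq]
          push_cast at h5
          omega
        have conv1 : ∀ t ∈ Finset.range (N+1),
            (t : ℚ) * ((b 0).choose t : ℚ) * ((b r.succ : ℚ)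
              * ch ((∑ l : Fin m, (b l.succ : ℤ)) - 1) (((N - t : ℕ) : ℤ) - 1))
            = (b r.succ : ℚ) * ((t : ℚ) * ((b 0).choose t : ℚ)
                * ch q (((N : ℤ) - 1) - t)) := by
          intro t ht
          rw [Finset.mem_range] at ht
          rw [hq2]
          have harg : ((N - t : ℕ) : ℤ) - 1 = ((N : ℤ) - 1) - t := by omega
          rw [harg]
          ring
        rw [Finset.sum_congr rfl conv1, ← Finset.mul_sum,
          J1 (b 0) q N ((N : ℤ) - 1) (by omega)]
        have harg2 : (N : ℤ) - 1 - 1 = (N : ℤ) - 2 := by ring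
        rw [harg2, hEsum q hq2]
        ring
    induction i using Fin.cases with
    | zero =>
      induction j using Fin.cases with
      | zero => exact absurd rfl hij
      | succ j =>
        rw [← mixed j]
        refine Finset.sum_congr rfl fun p _ => Finset.sum_congr rfl fun x _ => ?_
        simp only [Fin.cons_zero, Fin.cons_succ]
    | succ i =>
      induction j using Fin.cases with
      | zero =>
        rw [show ((b i.succ : ℚ) * (b 0 : ℚ)) = ((b 0 : ℚ) * (b i.succ : ℚ)) from mul_comm _ _,
          ← mixed i]
        refine Finset.sum_congr rfl fun p _ => Finset.sum_congr rfl fun x _ => ?_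
        simp only [Fin.cons_zero, Fin.cons_succ]
        ring
      | succ j =>
        have hij' : i ≠ j := fun h => hij (by rw [h])
        have inner : ∀ p : ℕ × ℕ, p ∈ Finset.HasAntidiagonal.antidiagonal N →
            (∑ x ∈ Finset.Nat.antidiagonalTuple m p.2,
              (∏ l : Fin (m+1), ((b l).choose ((Fin.cons p.1 x : Fin (m+1) → ℕ) l) : ℚ))
                * ((((Fin.cons p.1 x : Fin (m+1) → ℕ) i.succ : ℕ) : ℚ)
                  * (((Fin.cons p.1 x : Fin (m+1) → ℕ) j.succ : ℕ) : ℚ)))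
            = ((b 0).choose p.1 : ℚ) * ((b i.succ : ℚ) * (b j.succ : ℚ)
                * ch ((∑ l : Fin m, (b l.succ : ℤ)) - 2) ((p.2 : ℤ) - 2)) := by
          intro p _
          calc (∑ x ∈ Finset.Nat.antidiagonalTuple m p.2,
              (∏ l : Fin (m+1), ((b l).choose ((Fin.cons p.1 x : Fin (m+1) → ℕ) l) : ℚ))
                * ((((Fin.cons p.1 x : Fin (m+1) → ℕ) i.succ : ℕ) : ℚ)
                  * (((Fin.cons p.1 x : Fin (m+1) → ℕ) j.succ : ℕ) : ℚ)))
              = ((b 0).choose p.1 : ℚ)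
                * ∑ x ∈ Finset.Nat.antidiagonalTuple m p.2,
                  (∏ l : Fin m, ((b l.succ).choose (x l) : ℚ)) * (((x i : ℕ) : ℚ) * ((x j : ℕ) : ℚ)) := by
                rw [Finset.mul_sum]
                refine Finset.sum_congr rfl fun x _ => ?_
                rw [prodsplit]
                simp only [Fin.cons_succ]
                ring
            _ = ((b 0).choose p.1 : ℚ) * ((b i.succ : ℚ) * (b j.succ : ℚ)
                * ch ((∑ l : Fin m, (b l.succ : ℤ)) - 2) ((p.2 : ℤ) - 2)) := by
                rw [ih p.2 (fun l => b l.succ) i j hij']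
        rw [Finset.sum_congr rfl inner, Finset.Nat.sum_antidiagonal_eq_sum_range_succ_mk]
        by_cases hB : (∑ l : Fin m, b l.succ) ≤ 1
        · have hpair : b i.succ + b j.succ ≤ ∑ l : Fin m, b l.succ := by
            have hps := Finset.sum_le_sum_of_subset (f := fun l : Fin m => b l.succ)
              (Finset.subset_univ ({i, j} : Finset (Fin m)))
            rwa [Finset.sum_pair hij'] at hps
          have hz : (b i.succ : ℚ) * (b j.succ : ℚ) = 0 := by
            have h9 : b i.succ = 0 ∨ b j.succ = 0 := by omega
            rcases h9 with h | h <;> rw [h] <;> push_cast <;> ring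
          rw [Finset.sum_eq_zero fun t _ => by rw [hz]; ring, hz]
          ring
        · obtain ⟨q, hq⟩ : ∃ q, ∑ l : Fin m, b l.succ = q + 2 :=
            ⟨(∑ l : Fin m, b l.succ) - 2, by omega⟩
          have hq2 : (∑ l : Fin m, (b l.succ : ℤ)) - 2 = (q : ℤ) := by
            have h5 : ((∑ l : Fin m, b l.succ : ℕ) : ℤ) = ((q+2 : ℕ) : ℤ) := by rw [hq]
            push_cast at h5
            omega
          have conv1 : ∀ t ∈ Finset.range (N+1),
              ((b 0).choose t : ℚ) * ((b i.succ : ℚ) * (b j.succ : ℚ)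
                * ch ((∑ l : Fin m, (b l.succ : ℤ)) - 2) (((N - t : ℕ) : ℤ) - 2))
              = (b i.succ : ℚ) * (b j.succ : ℚ)
                  * (((b 0).choose t : ℚ) * ch q (((N : ℤ) - 2) - t)) := by
            intro t ht
            rw [Finset.mem_range] at ht
            rw [hq2]
            have harg : ((N - t : ℕ) : ℤ) - 2 = ((N : ℤ) - 2) - t := by omega
            rw [harg]
            ring
          rw [Finset.sum_congr rfl conv1, ← Finset.mul_sum,
            J0 (b 0) q N ((N : ℤ) - 2) (by omega)]
          have hE : ((b 0 : ℕ) : ℤ) + (q : ℤ) = (∑ l : Fin (m+1), (b l : ℤ)) - 2 := by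
            rw [Fin.sum_univ_succ (f := fun l => ((b l) : ℤ)), ← hq2]
            ring
          rw [hE]

lemma Rmaster (m N : ℕ) (b : Fin m → ℕ) (u v : Fin m → ℚ) (U0 V0 : ℚ) :
    ∑ k ∈ Finset.Nat.antidiagonalTuple m N, (∏ i, ((b i).choose (k i) : ℚ))
        * ((U0 + ∑ i, u i * (k i : ℚ)) * (V0 + ∑ i, v i * (k i : ℚ)))
      = U0 * V0 * ch (∑ i, (b i : ℤ)) (N : ℤ)
        + (U0 * (∑ i, v i * (b i : ℚ)) + V0 * (∑ i, u i * (b i : ℚ))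
            + (∑ i, u i * v i * (b i : ℚ)))
            * ch ((∑ i, (b i : ℤ)) - 1) ((N : ℤ) - 1)
        + ((∑ i, u i * (b i : ℚ)) * (∑ i, v i * (b i : ℚ)) - (∑ i, u i * v i * (b i : ℚ)))
            * ch ((∑ i, (b i : ℤ)) - 2) ((N : ℤ) - 2) := by
  classical
  set ch0 := ch (∑ i, (b i : ℤ)) (N : ℤ) with hch0
  set ch1 := ch ((∑ i, (b i : ℤ)) - 1) ((N : ℤ) - 1) with hch1
  set ch2 := ch ((∑ i, (b i : ℤ)) - 2) ((N : ℤ) - 2) with hch2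
  have hA : ∑ k ∈ Finset.Nat.antidiagonalTuple m N, (∏ i, ((b i).choose (k i) : ℚ)) = ch0 := by
    rw [T1Q, hch0, show (∑ i, (b i : ℤ)) = ((∑ i, b i : ℕ) : ℤ) by push_cast; rfl, ch_nat]
  have hU : ∀ w : Fin m → ℚ,
      ∑ k ∈ Finset.Nat.antidiagonalTuple m N,
        (∏ i, ((b i).choose (k i) : ℚ)) * (∑ i, w i * (k i : ℚ))
      = (∑ i, w i * (b i : ℚ)) * ch1 := by
    intro w
    calc ∑ k ∈ Finset.Nat.antidiagonalTuple m N,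
          (∏ i, ((b i).choose (k i) : ℚ)) * (∑ i, w i * (k i : ℚ))
        = ∑ k ∈ Finset.Nat.antidiagonalTuple m N, ∑ i,
            w i * ((∏ j, ((b j).choose (k j) : ℚ)) * (k i : ℚ)) := by
          refine Finset.sum_congr rfl fun k _ => ?_
          rw [Finset.mul_sum]
          exact Finset.sum_congr rfl fun i _ => by ring
      _ = ∑ i, ∑ k ∈ Finset.Nat.antidiagonalTuple m N,
            w i * ((∏ j, ((b j).choose (k j) : ℚ)) * (k i : ℚ)) := Finset.sum_comm
      _ = ∑ i, w i * ((b i : ℚ) * ch1) := by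
          refine Finset.sum_congr rfl fun i _ => ?_
          rw [← Finset.mul_sum, T2]
      _ = (∑ i, w i * (b i : ℚ)) * ch1 := by
          rw [Finset.sum_mul]
          exact Finset.sum_congr rfl fun i _ => by ring
  have Sval : ∀ i j : Fin m,
      ∑ k ∈ Finset.Nat.antidiagonalTuple m N,
        (∏ l, ((b l).choose (k l) : ℚ)) * ((k i : ℚ) * (k j : ℚ))
      = (b i : ℚ) * (b j : ℚ) * ch2 + (if i = j then (b i : ℚ) * (ch1 - ch2) else 0) := by
    intro i j
    by_cases hij : i = j
    · subst hij
      have hsplit : ∑ k ∈ Finset.Nat.antidiagonalTuple m N,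
          (∏ l, ((b l).choose (k l) : ℚ)) * ((k i : ℚ) * (k i : ℚ))
          = (∑ k ∈ Finset.Nat.antidiagonalTuple m N,
              (∏ l, ((b l).choose (k l) : ℚ)) * ((k i : ℚ) * ((k i : ℚ) - 1)))
            + ∑ k ∈ Finset.Nat.antidiagonalTuple m N,
              (∏ l, ((b l).choose (k l) : ℚ)) * (k i : ℚ) := by
        rw [← Finset.sum_add_distrib]
        exact Finset.sum_congr rfl fun k _ => by ring
      rw [hsplit, T3a, T2, if_pos rfl]
      ring
    · rw [T3b m N b i j hij, if_neg hij]
      ring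
  have hQ : ∑ k ∈ Finset.Nat.antidiagonalTuple m N, (∏ i, ((b i).choose (k i) : ℚ))
        * ((∑ i, u i * (k i : ℚ)) * (∑ i, v i * (k i : ℚ)))
      = (∑ i, u i * (b i : ℚ)) * (∑ i, v i * (b i : ℚ)) * ch2
        + (∑ i, u i * v i * (b i : ℚ)) * (ch1 - ch2) := by
    calc ∑ k ∈ Finset.Nat.antidiagonalTuple m N, (∏ i, ((b i).choose (k i) : ℚ))
          * ((∑ i, u i * (k i : ℚ)) * (∑ i, v i * (k i : ℚ)))
        = ∑ k ∈ Finset.Nat.antidiagonalTuple m N, ∑ i, ∑ j,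
            u i * v j * ((∏ l, ((b l).choose (k l) : ℚ)) * ((k i : ℚ) * (k j : ℚ))) := by
          refine Finset.sum_congr rfl fun k _ => ?_
          rw [Finset.sum_mul_sum, Finset.mul_sum]
          refine Finset.sum_congr rfl fun i _ => ?_
          rw [Finset.mul_sum]
          exact Finset.sum_congr rfl fun j _ => by ring
      _ = ∑ i, ∑ j, ∑ k ∈ Finset.Nat.antidiagonalTuple m N,
            u i * v j * ((∏ l, ((b l).choose (k l) : ℚ)) * ((k i : ℚ) * (k j : ℚ))) := by
          rw [Finset.sum_comm]
          exact Finset.sum_congr rfl fun i _ => Finset.sum_comm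
      _ = ∑ i, ∑ j, u i * v j
            * ((b i : ℚ) * (b j : ℚ) * ch2 + (if i = j then (b i : ℚ) * (ch1 - ch2) else 0)) := by
          refine Finset.sum_congr rfl fun i _ => Finset.sum_congr rfl fun j _ => ?_
          rw [← Finset.mul_sum, Sval]
      _ = (∑ i, ∑ j, u i * v j * ((b i : ℚ) * (b j : ℚ) * ch2))
          + ∑ i, ∑ j, (if i = j then u i * v j * ((b i : ℚ) * (ch1 - ch2)) else 0) := by
          rw [← Finset.sum_add_distrib]
          refine Finset.sum_congr rfl fun i _ => ?_
          rw [← Finset.sum_add_distrib]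
          refine Finset.sum_congr rfl fun j _ => ?_
          by_cases hij : i = j
          · rw [if_pos hij, if_pos hij]; ring
          · rw [if_neg hij, if_neg hij]; ring
      _ = (∑ i, u i * (b i : ℚ)) * (∑ i, v i * (b i : ℚ)) * ch2
          + (∑ i, u i * v i * (b i : ℚ)) * (ch1 - ch2) := by
          congr 1
          · calc ∑ i, ∑ j, u i * v j * ((b i : ℚ) * (b j : ℚ) * ch2)
                = ∑ i, (u i * (b i : ℚ)) * ((∑ j, v j * (b j : ℚ)) * ch2) := by
                  refine Finset.sum_congr rfl fun i _ => ?_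
                  rw [Finset.sum_mul, Finset.mul_sum]
                  exact Finset.sum_congr rfl fun j _ => by ring
              _ = (∑ i, u i * (b i : ℚ)) * (∑ i, v i * (b i : ℚ)) * ch2 := by
                  rw [← Finset.sum_mul]
                  ring
          · calc ∑ i, ∑ j, (if i = j then u i * v j * ((b i : ℚ) * (ch1 - ch2)) else 0)
                = ∑ i, u i * v i * ((b i : ℚ) * (ch1 - ch2)) := by
                  refine Finset.sum_congr rfl fun i _ => ?_
                  simp
              _ = (∑ i, u i * v i * (b i : ℚ)) * (ch1 - ch2) := by
                  rw [Finset.sum_mul]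
                  exact Finset.sum_congr rfl fun i _ => by ring
  calc ∑ k ∈ Finset.Nat.antidiagonalTuple m N, (∏ i, ((b i).choose (k i) : ℚ))
        * ((U0 + ∑ i, u i * (k i : ℚ)) * (V0 + ∑ i, v i * (k i : ℚ)))
      = ∑ k ∈ Finset.Nat.antidiagonalTuple m N,
          (U0 * V0 * (∏ i, ((b i).choose (k i) : ℚ))
            + (U0 * ((∏ i, ((b i).choose (k i) : ℚ)) * (∑ i, v i * (k i : ℚ)))
            + (V0 * ((∏ i, ((b i).choose (k i) : ℚ)) * (∑ i, u i * (k i : ℚ)))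
            + (∏ i, ((b i).choose (k i) : ℚ))
                * ((∑ i, u i * (k i : ℚ)) * (∑ i, v i * (k i : ℚ)))))) := by
        exact Finset.sum_congr rfl fun k _ => by ring
    _ = U0 * V0 * ch0 + (U0 * ((∑ i, v i * (b i : ℚ)) * ch1)
          + (V0 * ((∑ i, u i * (b i : ℚ)) * ch1)
          + ((∑ i, u i * (b i : ℚ)) * (∑ i, v i * (b i : ℚ)) * ch2
              + (∑ i, u i * v i * (b i : ℚ)) * (ch1 - ch2)))) := by
        rw [Finset.sum_add_distrib, Finset.sum_add_distrib, Finset.sum_add_distrib,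
          ← Finset.mul_sum, ← Finset.mul_sum, ← Finset.mul_sum, hA, hU u, hU v, hQ]
    _ = U0 * V0 * ch0
        + (U0 * (∑ i, v i * (b i : ℚ)) + V0 * (∑ i, u i * (b i : ℚ))
            + (∑ i, u i * v i * (b i : ℚ))) * ch1
        + ((∑ i, u i * (b i : ℚ)) * (∑ i, v i * (b i : ℚ)) - (∑ i, u i * v i * (b i : ℚ)))
            * ch2 := by ring

lemma chA {a c : ℕ} (hca : c ≤ a) (k : ℕ) :
    ch a k * ch k c = ch a c * ch ((a - c : ℕ) : ℤ) ((k : ℤ) - c) := by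
  by_cases hck : c ≤ k
  · by_cases hka : k ≤ a
    · have h1 : ((k : ℤ) - c) = ((k - c : ℕ) : ℤ) := by omega
      rw [h1, ch_nat, ch_nat, ch_nat, ch_nat]
      exact_mod_cast congrArg (Nat.cast : ℕ → ℚ) (Nat.choose_mul hck)
    · rw [ch_of_gt (by exact_mod_cast not_le.mp hka : (a : ℤ) < k),
        ch_of_gt (by omega : ((a - c : ℕ) : ℤ) < (k : ℤ) - c)]
      ring
  · rw [ch_of_gt (by exact_mod_cast not_le.mp hck : (k : ℤ) < c),
      ch_neg (by omega : (k : ℤ) - c < 0)]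
    ring

lemma shift (m n : ℕ) (c : Fin m → ℕ) (hcn : ∑ i, c i ≤ n) (g : (Fin m → ℕ) → ℚ)
    (hvanish : ∀ k, (∃ i, k i < c i) → g k = 0) :
    ∑ k ∈ Finset.Nat.antidiagonalTuple m n, g k
      = ∑ j ∈ Finset.Nat.antidiagonalTuple m (n - ∑ i, c i), g (fun i => j i + c i) := by
  classical
  rw [← Finset.sum_filter_add_sum_filter_not (Finset.Nat.antidiagonalTuple m n)
    (fun k => ∀ i, c i ≤ k i) g]
  have hz : ∑ k ∈ Finset.filter (fun k => ¬ ∀ i, c i ≤ k i)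
      (Finset.Nat.antidiagonalTuple m n), g k = 0 := by
    refine Finset.sum_eq_zero fun k hk => ?_
    rw [Finset.mem_filter] at hk
    have h2 := hk.2
    push_neg at h2
    obtain ⟨i, hi⟩ := h2
    exact hvanish k ⟨i, hi⟩
  rw [hz, add_zero]
  refine Finset.sum_nbij' (fun k => fun i => k i - c i) (fun j => fun i => j i + c i)
    ?_ ?_ ?_ ?_ ?_
  · intro k hk
    rw [Finset.mem_filter, Finset.Nat.mem_antidiagonalTuple] at hk
    rw [Finset.Nat.mem_antidiagonalTuple]
    show ∑ i, (k i - c i) = n - ∑ i, c i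
    rw [Finset.sum_tsub_distrib Finset.univ (fun i _ => hk.2 i), hk.1]
  · intro j hj
    rw [Finset.Nat.mem_antidiagonalTuple] at hj
    rw [Finset.mem_filter, Finset.Nat.mem_antidiagonalTuple]
    constructor
    · show ∑ i, (j i + c i) = n
      rw [Finset.sum_add_distrib, hj]
      omega
    · intro i
      show c i ≤ j i + c i
      omega
  · intro k hk
    rw [Finset.mem_filter] at hk
    funext i
    show (k i - c i) + c i = k i
    have := hk.2 i
    omega
  · intro j _
    funext i
    show (j i + c i) - c i = j i
    omega
  · intro k hk
    rw [Finset.mem_filter] at hk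
    exact congrArg g (funext fun i => by
      show k i = (k i - c i) + c i
      have := hk.2 i
      omega)

lemma rec1 (q : ℕ) (M : ℤ) :
    (q : ℚ) * ch ((q : ℤ) - 1) (M - 1) = (M : ℚ) * ch q M := by
  rcases lt_or_ge M 0 with hM | hM
  · rw [ch_neg (by omega), ch_neg hM]
    ring
  rcases Nat.eq_zero_or_pos q with hq | hq
  · subst hq
    rcases eq_or_lt_of_le hM with h0 | h0
    · rw [← h0]
      simp
    · rw [ch_of_gt (by omega), ch_of_gt (by omega)]
      ring
  rcases eq_or_lt_of_le hM with h0 | h0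
  · rw [← h0, ch_neg (by omega)]
    simp
  by_cases hMq : M ≤ q
  · obtain ⟨Mn, rfl⟩ := Int.eq_ofNat_of_zero_le hM
    have hMn1 : 1 ≤ Mn := by exact_mod_cast h0
    have hMnq : Mn ≤ q := by exact_mod_cast hMq
    have e1 : ((q : ℤ) - 1) = ((q - 1 : ℕ) : ℤ) := by omega
    have e2 : ((Mn : ℤ) - 1) = ((Mn - 1 : ℕ) : ℤ) := by omega
    rw [e1, e2, ch_nat, ch_nat]
    have key := Nat.add_one_mul_choose_eq (q - 1) (Mn - 1)
    have hqs : (q - 1) + 1 = q := by omega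
    have hms : (Mn - 1) + 1 = Mn := by omega
    rw [hqs, hms] at key
    have := congrArg (Nat.cast : ℕ → ℚ) key
    push_cast at this
    push_cast
    linear_combination this
  · rw [ch_of_gt (by omega), ch_of_gt (by omega)]
    ring

lemma rec2 (q : ℕ) (M : ℤ) :
    (q : ℚ) * ((q : ℚ) - 1) * ch ((q : ℤ) - 2) (M - 2)
      = (M : ℚ) * ((M : ℚ) - 1) * ch q M := by
  cases q with
  | zero =>
    simp only [Nat.cast_zero, zero_mul]
    rcases lt_trichotomy M 0 with h | h | h
    · rw [ch_neg h]; ring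
    · subst h; simp
    · rw [ch_of_gt (by exact_mod_cast h)]; ring
  | succ q =>
    have h1 := rec1 (q+1) M
    have h2 := rec1 q (M-1)
    rw [show ((q+1 : ℕ) : ℤ) - 1 = (q : ℤ) by push_cast; ring] at h1
    rw [show ((q+1 : ℕ) : ℤ) - 2 = (q : ℤ) - 1 by push_cast; ring,
      show M - 2 = (M - 1) - 1 by ring]
    push_cast at h1 h2 ⊢
    linear_combination ((q : ℚ) + 1) * h2 + ((M : ℚ) - 1) * h1

theorem stmt4 (m n : ℕ) (hm : 1 ≤ m) (a c : Fin m → ℕ) (x y : Fin m → ℚ) :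
    (∑ k ∈ Finset.Nat.antidiagonalTuple m n, (∏ i, ch (a i) (k i) * ch (k i) (c i)) * (∑ i, x i * (k i : ℚ)) * (∑ i, y i * (k i : ℚ)))
        * (((∑ i, (a i : ℚ)) - (∑ i, (c i : ℚ))) * ((∑ i, (a i : ℚ)) - (∑ i, (c i : ℚ)) - 1))
      = ch ((∑ i, (a i : ℤ)) - ∑ i, (c i : ℤ)) ((n : ℤ) - ∑ i, (c i : ℤ)) * (∏ i, ch (a i) (c i))
        * (((n : ℚ) - (∑ i, (c i : ℚ))) * (((n : ℚ) - (∑ i, (c i : ℚ)) - 1) * (∑ i, x i * (a i : ℚ)) * (∑ i, y i * (a i : ℚ))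
              + ((∑ i, (a i : ℚ)) - (n : ℚ)) * ((∑ i, x i * y i * (a i : ℚ)) - (∑ i, x i * y i * (c i : ℚ)) + (∑ i, x i * (a i : ℚ)) * (∑ i, y i * (c i : ℚ)) + (∑ i, y i * (a i : ℚ)) * (∑ i, x i * (c i : ℚ))))
           + ((∑ i, (a i : ℚ)) - (n : ℚ)) * ((∑ i, (a i : ℚ)) - (n : ℚ) - 1) * (∑ i, x i * (c i : ℚ)) * (∑ i, y i * (c i : ℚ))) := by
  by_cases hac : ∀ i, c i ≤ a i
  · set b : Fin m → ℕ := fun i => a i - c i with hb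
    set P : ℚ := ∏ i, ch (a i) (c i) with hP
    have hprod : ∀ k : Fin m → ℕ,
        (∏ i, ch (a i) (k i) * ch (k i) (c i))
          = P * ∏ i, ch ((b i : ℕ) : ℤ) ((k i : ℤ) - c i) := by
      intro k
      rw [hP, ← Finset.prod_mul_distrib]
      exact Finset.prod_congr rfl fun i _ => chA (hac i) (k i)
    have hLHS : (∑ k ∈ Finset.Nat.antidiagonalTuple m n,
          (∏ i, ch (a i) (k i) * ch (k i) (c i)) * (∑ i, x i * (k i : ℚ)) * (∑ i, y i * (k i : ℚ)))
        = P * ∑ k ∈ Finset.Nat.antidiagonalTuple m n,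
            (∏ i, ch ((b i : ℕ) : ℤ) ((k i : ℤ) - c i))
              * ((∑ i, x i * (k i : ℚ)) * (∑ i, y i * (k i : ℚ))) := by
      rw [Finset.mul_sum]
      refine Finset.sum_congr rfl fun k _ => ?_
      rw [hprod k]
      ring
    rw [hLHS]
    by_cases hcn : ∑ i, c i ≤ n
    · have hsh := shift m n c hcn
        (fun k => (∏ i, ch ((b i : ℕ) : ℤ) ((k i : ℤ) - c i))
          * ((∑ i, x i * (k i : ℚ)) * (∑ i, y i * (k i : ℚ))))
        (by
          rintro k ⟨i, hi⟩
          show (∏ i, ch ((b i : ℕ) : ℤ) ((k i : ℤ) - c i))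
            * ((∑ i, x i * (k i : ℚ)) * (∑ i, y i * (k i : ℚ))) = 0
          rw [Finset.prod_eq_zero (Finset.mem_univ i) (ch_neg (by omega : (k i : ℤ) - c i < 0)),
            zero_mul])
      rw [hsh]
      have hterm : ∀ j : Fin m → ℕ,
          (∏ i, ch ((b i : ℕ) : ℤ) (((j i + c i : ℕ) : ℤ) - c i))
            * ((∑ i, x i * ((j i + c i : ℕ) : ℚ)) * (∑ i, y i * ((j i + c i : ℕ) : ℚ)))
          = (∏ i, ((b i).choose (j i) : ℚ))
            * (((∑ i, x i * (c i : ℚ)) + ∑ i, x i * (j i : ℚ))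
              * ((∑ i, y i * (c i : ℚ)) + ∑ i, y i * (j i : ℚ))) := by
        intro j
        congr 1
        · refine Finset.prod_congr rfl fun i _ => ?_
          rw [show ((j i + c i : ℕ) : ℤ) - c i = ((j i : ℕ) : ℤ) by push_cast; ring, ch_nat]
        · congr 1 <;>
          · rw [← Finset.sum_add_distrib]
            refine Finset.sum_congr rfl fun i _ => ?_
            push_cast
            ring
      rw [Finset.sum_congr rfl (fun j _ => hterm j),
        Rmaster m (n - ∑ i, c i) b x y (∑ i, x i * (c i : ℚ)) (∑ i, y i * (c i : ℚ))]
      -- scalar identities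
      set B : ℕ := ∑ i, b i with hBdef
      set N' : ℕ := n - ∑ i, c i with hN'def
      have hsumZ : (∑ i, (b i : ℤ)) = (B : ℤ) := by rw [hBdef]; push_cast; rfl
      have hZa : (∑ i, (a i : ℤ)) - ∑ i, (c i : ℤ) = (B : ℤ) := by
        rw [← hsumZ, ← Finset.sum_sub_distrib]
        exact Finset.sum_congr rfl fun i _ => by have := hac i; simp only [hb]; omega
      have hZn : (n : ℤ) - ∑ i, (c i : ℤ) = (N' : ℤ) := by
        rw [hN'def, Nat.cast_sub hcn]
        push_cast
        ring
      have hQB : (∑ i, (a i : ℚ)) - (∑ i, (c i : ℚ)) = (B : ℚ) := by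
        have := congrArg (fun z : ℤ => (z : ℚ)) hZa
        push_cast at this
        exact_mod_cast this
      have hQn : (n : ℚ) - (∑ i, (c i : ℚ)) = (N' : ℚ) := by
        have := congrArg (fun z : ℤ => (z : ℚ)) hZn
        push_cast at this
        exact_mod_cast this
      have hQan : (∑ i, (a i : ℚ)) - (n : ℚ) = (B : ℚ) - N' := by
        rw [← hQB, ← hQn]
        ring
      have hxa : (∑ i, x i * (a i : ℚ))
          = (∑ i, x i * (c i : ℚ)) + ∑ i, x i * (b i : ℚ) := by
        rw [← Finset.sum_add_distrib]
        refine Finset.sum_congr rfl fun i _ => ?_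
        have := hac i
        have hcast : (a i : ℚ) = (c i : ℚ) + (b i : ℚ) := by
          simp only [hb]
          push_cast [this]
          ring
        rw [hcast]
        ring
      have hya : (∑ i, y i * (a i : ℚ))
          = (∑ i, y i * (c i : ℚ)) + ∑ i, y i * (b i : ℚ) := by
        rw [← Finset.sum_add_distrib]
        refine Finset.sum_congr rfl fun i _ => ?_
        have := hac i
        have hcast : (a i : ℚ) = (c i : ℚ) + (b i : ℚ) := by
          simp only [hb]
          push_cast [this]
          ring
        rw [hcast]
        ring
      have hxya : (∑ i, x i * y i * (a i : ℚ))
          = (∑ i, x i * y i * (c i : ℚ)) + ∑ i, x i * y i * (b i : ℚ) := by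
        rw [← Finset.sum_add_distrib]
        refine Finset.sum_congr rfl fun i _ => ?_
        have := hac i
        have hcast : (a i : ℚ) = (c i : ℚ) + (b i : ℚ) := by
          simp only [hb]
          push_cast [this]
          ring
        rw [hcast]
        ring
      rw [hsumZ, hZa, hZn, hQB, hQn, hQan, hxa, hya, hxya]
      have r1' : (B : ℚ) * ch ((B : ℤ) - 1) ((N' : ℤ) - 1) = (N' : ℚ) * ch B N' := by
        have := rec1 B (N' : ℤ)
        push_cast at this ⊢
        exact this
      have r2' : (B : ℚ) * ((B : ℚ) - 1) * ch ((B : ℤ) - 2) ((N' : ℤ) - 2)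
          = (N' : ℚ) * ((N' : ℚ) - 1) * ch B N' := by
        have := rec2 B (N' : ℤ)
        push_cast at this ⊢
        exact this
      linear_combination
        (P * ((∑ i, x i * (c i : ℚ)) * (∑ i, y i * (b i : ℚ))
          + (∑ i, y i * (c i : ℚ)) * (∑ i, x i * (b i : ℚ))
          + (∑ i, x i * y i * (b i : ℚ))) * ((B : ℚ) - 1)) * r1'
        + P * ((∑ i, x i * (b i : ℚ)) * (∑ i, y i * (b i : ℚ))
          - (∑ i, x i * y i * (b i : ℚ))) * r2'
    · -- n < ∑ c
      rw [Finset.sum_eq_zero (fun k hk => by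
        rw [Finset.Nat.mem_antidiagonalTuple] at hk
        have hex : ∃ i, k i < c i := by
          by_contra hcon
          push_neg at hcon
          exact hcn (hk ▸ Finset.sum_le_sum fun i _ => hcon i)
        obtain ⟨i, hi⟩ := hex
        rw [Finset.prod_eq_zero (Finset.mem_univ i) (ch_neg (by omega : (k i : ℤ) - c i < 0)),
          zero_mul])]
      rw [ch_neg (by
        rw [show (∑ i, (c i : ℤ)) = ((∑ i, c i : ℕ) : ℤ) by push_cast; rfl]
        omega : (n : ℤ) - ∑ i, (c i : ℤ) < 0)]
      ring
  · push_neg at hac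
    obtain ⟨i0, hi0⟩ := hac
    have hR0 : (∏ i, ch (a i) (c i)) = 0 :=
      Finset.prod_eq_zero (Finset.mem_univ i0) (ch_of_gt (by exact_mod_cast hi0))
    have hL0 : ∀ k : Fin m → ℕ, (∏ i, ch (a i) (k i) * ch (k i) (c i)) = 0 := by
      intro k
      refine Finset.prod_eq_zero (Finset.mem_univ i0) ?_
      by_cases h : (k i0 : ℤ) ≤ (a i0 : ℤ)
      · have h2 : ch (k i0) (c i0) = 0 := ch_of_gt (by
          have hi0' : (a i0 : ℤ) < c i0 := by exact_mod_cast hi0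
          omega)
        rw [h2, mul_zero]
      · have h2 : ch (a i0) (k i0) = 0 := ch_of_gt (not_le.mp h)
        rw [h2, zero_mul]
    rw [Finset.sum_eq_zero (fun k _ => by rw [hL0 k]; ring), hR0]
    ring
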